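/- If M is a typable λμ-term in normal form with respect to the rules {β, μ, μ', ρ, ε}, then its α-translation M_α is also in normal form with respect to these rules; moreover, if M_α starts with μ then M starts with μ, and if M_α starts with λ then M starts with λ or with a bracket [·]. -/
import Mathlib


namespace LMu

/-- λμ-terms: variables, λ-abstraction, application, bracket [α]M, μ-abstraction. -/
inductive Trm : Type
  | var : ℕ → Trm
  | lam : ℕ → Trm → Trm
  | app : Trm → Trm → Trm
  | brk : ℕ → Trm → Trm
  | mu  : ℕ → Trm → Trm
deriving DecidableEq

/-- α-translation: replace every subterm [α]N by N. -/
def trans (a : ℕ) : Trm → Trm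
  | .var x => .var x
  | .lam x M => .lam x (trans a M)
  | .app M N => .app (trans a M) (trans a N)
  | .brk b M => if b = a then trans a M else .brk b (trans a M)
  | .mu b M => .mu b (trans a M)

/-- Renaming of free occurrences of the μ-variable a by b. -/
def renMu (a b : ℕ) : Trm → Trm
  | .var x => .var x
  | .lam x M => .lam x (renMu a b M)
  | .app M N => .app (renMu a b M) (renMu a b N)
  | .brk c M => .brk (if c = a then b else c) (renMu a b M)
  | .mu c M => if c = a then .mu c M else .mu c (renMu a b M)

/-- λ-substitution M[x:=N]. -/
def subL (x : ℕ) (N : Trm) : Trm → Trm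
  | .var y => if y = x then N else .var y
  | .lam y M => if y = x then .lam y M else .lam y (subL x N M)
  | .app M₁ M₂ => .app (subL x N M₁) (subL x N M₂)
  | .brk a M => .brk a (subL x N M)
  | .mu a M => .mu a (subL x N M)

/-- Right μ-substitution M[α:=_r N]: replace each [α]P by [α](P)N. -/
def subR (a : ℕ) (N : Trm) : Trm → Trm
  | .var x => .var x
  | .lam x M => .lam x (subR a N M)
  | .app M₁ M₂ => .app (subR a N M₁) (subR a N M₂)
  | .brk b M => if b = a then .brk b (.app (subR a N M) N) else .brk b (subR a N M)
  | .mu b M => if b = a then .mu b M else .mu b (subR a N M)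

/-- Left μ-substitution M[α:=_l N]: replace each [α]P by [α](N)P. -/
def subLmu (a : ℕ) (N : Trm) : Trm → Trm
  | .var x => .var x
  | .lam x M => .lam x (subLmu a N M)
  | .app M₁ M₂ => .app (subLmu a N M₁) (subLmu a N M₂)
  | .brk b M => if b = a then .brk b (.app N (subLmu a N M)) else .brk b (subLmu a N M)
  | .mu b M => if b = a then .mu b M else .mu b (subLmu a N M)

/-- Free μ-variables. -/
def fvMu : Trm → Finset ℕ
  | .var _ => ∅
  | .lam _ M => fvMu M
  | .app M N => fvMu M ∪ fvMu N
  | .brk a M => insert a (fvMu M)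
  | .mu a M => fvMu M \ {a}

/-- Complexity of a term. -/
def cxty : Trm → ℕ
  | .var _ => 1
  | .lam _ M => cxty M + 1
  | .app M N => cxty M + cxty N + 1
  | .brk _ M => cxty M + 1
  | .mu _ M => cxty M + 1

inductive Rule | beta | mu | mu' | rho | theta | eps
deriving DecidableEq

/-- Head (root) reduction for each rule. -/
inductive Head : Rule → Trm → Trm → Prop
  | beta (x M N) : Head .beta (.app (.lam x M) N) (subL x N M)
  | mu (a M N) : Head .mu (.app (.mu a M) N) (.mu a (subR a N M))
  | mu' (a M N) : Head .mu' (.app N (.mu a M)) (.mu a (subLmu a N M))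
  | rho (a b M) : Head .rho (.brk b (.mu a M)) (renMu a b M)
  | theta (a M) : a ∉ fvMu M → Head .theta (.mu a (.brk a M)) M
  | eps (a b M) : Head .eps (.mu a (.mu b M)) (.mu a (trans b M))

/-- One-step reduction by any rule in S, anywhere in the term. -/
inductive Step (S : Set Rule) : Trm → Trm → Prop
  | head {r M N} : r ∈ S → Head r M N → Step S M N
  | lam {M N} (x) : Step S M N → Step S (.lam x M) (.lam x N)
  | appl {M M'} (N) : Step S M M' → Step S (.app M N) (.app M' N)
  | appr {N N'} (M) : Step S N N' → Step S (.app M N) (.app M N')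
  | brk {M N} (a) : Step S M N → Step S (.brk a M) (.brk a N)
  | mu {M N} (a) : Step S M N → Step S (.mu a M) (.mu a N)

def RS : Set Rule := {.beta, .mu, .rho, .theta, .eps}
def RS' : Set Rule := {.beta, .mu, .mu', .rho, .eps}
def RAll : Set Rule := {.beta, .mu, .mu', .rho, .theta, .eps}

/-- Normal form for the rule set S. -/
def NF (S : Set Rule) (M : Trm) : Prop := ∀ N, ¬ Step S M N

/-- Strong normalization: every reduction sequence terminates. -/
def SN (S : Set Rule) (M : Trm) : Prop := Acc (fun a b => Step S b a) M

def Steps (S : Set Rule) : Trm → Trm → Prop := Relation.ReflTransGen (Step S)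

/-- Weak normalization: reduces to a normal form. -/
def WN (S : Set Rule) (M : Trm) : Prop := ∃ N, Steps S M N ∧ NF S N

/-- There is a reduction sequence of length n starting from M. -/
def RedSeq (S : Set Rule) : ℕ → Trm → Prop
  | 0, _ => True
  | n + 1, M => ∃ N, Step S M N ∧ RedSeq S n N

/-- Simple types. -/
inductive Ty | atom : ℕ → Ty | bot : Ty | arr : Ty → Ty → Ty

abbrev Ctx := ℕ → Option Ty

/-- Typing judgment Γ ⊢ M : A ; Θ of the simply typed λμ-calculus. -/
inductive Typing : Ctx → Trm → Ty → Ctx → Prop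
  | ax {Γ Θ x A} : Γ x = some A → Typing Γ (.var x) A Θ
  | lam {Γ Θ x M A B} : Typing (Function.update Γ x (some A)) M B Θ →
      Typing Γ (.lam x M) (.arr A B) Θ
  | app {Γ Θ M N A B} : Typing Γ M (.arr A B) Θ → Typing Γ N A Θ →
      Typing Γ (.app M N) B Θ
  | brk {Γ Θ a M A} : Typing Γ M A Θ → Θ a = some A → Typing Γ (.brk a M) .bot Θ
  | mu {Γ Θ a M A} : Typing Γ M .bot (Function.update Θ a (some A)) →
      Typing Γ (.mu a M) A Θ

def Typable (M : Trm) : Prop := ∃ Γ A Θ, Typing Γ M A Θ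

/-- Subterm relation. -/
inductive Sub : Trm → Trm → Prop
  | refl (M) : Sub M M
  | lam {P M} (x) : Sub P M → Sub P (.lam x M)
  | appl {P M} (N) : Sub P M → Sub P (.app M N)
  | appr {P N} (M) : Sub P N → Sub P (.app M N)
  | brk {P M} (a) : Sub P M → Sub P (.brk a M)
  | mu {P M} (a) : Sub P M → Sub P (.mu a M)

/-- M is α-clean: no subterm [α]U with U a λ-abstraction. -/
def Clean (a : ℕ) (M : Trm) : Prop :=
  ∀ U, Sub (.brk a U) M → ∀ x P, U ≠ .lam x P

section Aux
open LMu

lemma mem_beta' : Rule.beta ∈ RS' := by simp [RS']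
lemma mem_mu' : Rule.mu ∈ RS' := by simp [RS']
lemma mem_mu'' : Rule.mu' ∈ RS' := by simp [RS']
lemma mem_rho' : Rule.rho ∈ RS' := by simp [RS']
lemma mem_eps' : Rule.eps ∈ RS' := by simp [RS']
lemma not_mem_theta' : Rule.theta ∉ RS' := by simp [RS']

lemma nf_lam' {x M} (h : NF RS' (.lam x M)) : NF RS' M :=
  fun N hs => h _ (Step.lam x hs)
lemma nf_appl' {M N} (h : NF RS' (.app M N)) : NF RS' M :=
  fun _ hs => h _ (Step.appl N hs)
lemma nf_appr' {M N} (h : NF RS' (.app M N)) : NF RS' N :=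
  fun _ hs => h _ (Step.appr M hs)
lemma nf_brk' {b M} (h : NF RS' (.brk b M)) : NF RS' M :=
  fun _ hs => h _ (Step.brk b hs)
lemma nf_mu' {b M} (h : NF RS' (.mu b M)) : NF RS' M :=
  fun _ hs => h _ (Step.mu b hs)

lemma typable_lam' {x M} : Typable (.lam x M) → Typable M := by
  rintro ⟨Γ, A, Θ, h⟩; cases h with | lam h => exact ⟨_, _, _, h⟩
lemma typable_appl' {M N} : Typable (.app M N) → Typable M := by
  rintro ⟨Γ, A, Θ, h⟩; cases h with | app h1 h2 => exact ⟨_, _, _, h1⟩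
lemma typable_appr' {M N} : Typable (.app M N) → Typable N := by
  rintro ⟨Γ, A, Θ, h⟩; cases h with | app h1 h2 => exact ⟨_, _, _, h2⟩
lemma typable_brk' {b M} : Typable (.brk b M) → Typable M := by
  rintro ⟨Γ, A, Θ, h⟩; cases h with | brk h _ => exact ⟨_, _, _, h⟩
lemma typable_mu'' {b M} : Typable (.mu b M) → Typable M := by
  rintro ⟨Γ, A, Θ, h⟩; cases h with | mu h => exact ⟨_, _, _, h⟩

lemma not_typable_app_brk {b Q N} : ¬ Typable (.app (.brk b Q) N) := by
  rintro ⟨Γ, A, Θ, h⟩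
  cases h with | app h1 h2 => cases h1

theorem trans_nf_aux (a : ℕ) : ∀ M : Trm, Typable M → NF RS' M →
    NF RS' (trans a M) ∧
    (∀ b P, trans a M = .mu b P → ∃ c Q, M = .mu c Q) ∧
    (∀ x P, trans a M = .lam x P →
      (∃ y Q, M = .lam y Q) ∨ (∃ b Q, M = .brk b Q)) := by
  intro M
  induction M with
  | var x =>
    intro _ _
    refine ⟨?_, ?_, ?_⟩
    · intro N h
      cases h with
      | head hr hh => cases hh
    · intro b P h; simp [trans] at h
    · intro x P h; simp [trans] at h
  | lam x M ih =>
    intro hT hNF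
    obtain ⟨ihNF, ihMu, ihLam⟩ := ih (typable_lam' hT) (nf_lam' hNF)
    refine ⟨?_, ?_, ?_⟩
    · intro N h
      cases h with
      | head hr hh => cases hh
      | lam _ hs => exact ihNF _ hs
    · intro b P h; simp [trans] at h
    · intro y P h; exact Or.inl ⟨x, M, rfl⟩
  | app M N ihM ihN =>
    intro hT hNF
    obtain ⟨ihMNF, ihMMu, ihMLam⟩ := ihM (typable_appl' hT) (nf_appl' hNF)
    obtain ⟨ihNNF, ihNMu, ihNLam⟩ := ihN (typable_appr' hT) (nf_appr' hNF)
    refine ⟨?_, ?_, ?_⟩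
    · intro K h
      simp only [trans] at h
      cases h with
      | head hr hh =>
        generalize hM : trans a M = Mt at hh
        generalize hN : trans a N = Nt at hh
        cases hh with
        | beta x M' N' =>
          rcases ihMLam x M' (by assumption) with ⟨y, Q, hM⟩ | ⟨b, Q, hM⟩
          · subst hM
            exact hNF _ (Step.head mem_beta' (Head.beta y Q N))
          · subst hM
            exact not_typable_app_brk hT
        | mu a' M' N' =>
          obtain ⟨c, Q, hM⟩ := ihMMu a' M' (by assumption)
          subst hM
          exact hNF _ (Step.head mem_mu' (Head.mu c Q N))
        | mu' a' M' N' =>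
          obtain ⟨c, Q, hN⟩ := ihNMu a' M' (by assumption)
          subst hN
          exact hNF _ (Step.head mem_mu'' (Head.mu' c Q M))
      | appl _ hs => exact ihMNF _ hs
      | appr _ hs => exact ihNNF _ hs
    · intro b P h; simp [trans] at h
    · intro y P h; simp [trans] at h
  | brk b M ih =>
    intro hT hNF
    obtain ⟨ihNF, ihMu, ihLam⟩ := ih (typable_brk' hT) (nf_brk' hNF)
    by_cases hba : b = a
    · refine ⟨?_, ?_, ?_⟩
      · simpa [trans, hba] using ihNF
      · intro c P h
        simp only [trans, hba, if_pos rfl] at h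
        obtain ⟨c', Q, hM⟩ := ihMu c P h
        subst hM
        exact absurd (hNF _ (Step.head mem_rho' (Head.rho c' b Q))) (by simp)
      · intro y P h
        exact Or.inr ⟨b, M, rfl⟩
    · refine ⟨?_, ?_, ?_⟩
      · intro K h
        simp only [trans, if_neg hba] at h
        cases h with
        | head hr hh =>
          generalize hM : trans a M = Mt at hh
          cases hh with
          | rho a' b' M' =>
            obtain ⟨c', Q, hM⟩ := ihMu a' M' (by assumption)
            subst hM
            exact hNF _ (Step.head mem_rho' (Head.rho c' b Q))
        | brk _ hs => exact ihNF _ hs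
      · intro c P h; simp [trans, hba] at h
      · intro y P h; simp [trans, hba] at h
  | mu b M ih =>
    intro hT hNF
    obtain ⟨ihNF, ihMu, ihLam⟩ := ih (typable_mu'' hT) (nf_mu' hNF)
    refine ⟨?_, ?_, ?_⟩
    · intro K h
      simp only [trans] at h
      cases h with
      | head hr hh =>
        generalize hM : trans a M = Mt at hh
        cases hh with
        | theta a' M' hfv => exact not_mem_theta' hr
        | eps a' b' M' =>
          obtain ⟨c', Q, hM⟩ := ihMu b' M' (by assumption)
          subst hM
          exact hNF _ (Step.head mem_eps' (Head.eps b c' Q))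
      | mu _ hs => exact ihNF _ hs
    · intro c P h; exact ⟨b, M, rfl⟩
    · intro y P h; simp [trans] at h

end Aux

end LMu

open LMu in
theorem trans_nf (M : LMu.Trm) (a : ℕ)
    (hT : LMu.Typable M) (hNF : LMu.NF LMu.RS' M) :
    LMu.NF LMu.RS' (LMu.trans a M) ∧
    (∀ b P, LMu.trans a M = .mu b P → ∃ c Q, M = .mu c Q) ∧
    (∀ x P, LMu.trans a M = .lam x P →
      (∃ y Q, M = .lam y Q) ∨ (∃ b Q, M = .brk b Q)) :=
  LMu.trans_nf_aux a M hT hNF
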